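/- Let B be a real symmetric positive definite n×n matrix with spectral decomposition B⁻¹ = U Λ Uᵀ, Λ = diag(λ₁ ≥ … ≥ λₙ > 0). Suppose B' = B − (1/x) a aᵀ is also symmetric positive definite, where x > 0 and a = e_i − e_j. Let δ' = min_{1≤i≤s} (1/λ_{i+1} − 1/λ_i) > 0 be the minimum separation among the s smallest eigenvalues of B. Then the 2-norm of the diagonal matrix of sines of principal angles between the span of the first s eigenvectors of B⁻¹ and of (B')⁻¹ is at most 4/(x·δ'). -/

import Mathlib

/-!
Write `ν = λ⁻¹`, `ν' = λ'⁻¹` for the eigenvalues of `B` and `B'` in increasing order. Since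
`B' = B - x⁻¹ a aᵀ ≤ B`, a dimension count (Courant–Fischer) gives `ν' k ≤ ν k`, so every `ν' q`
with `q < s` lies at least `δ'` below every `ν p` with `p ≥ s`. With `W = Uᵀ U'`, the matrix
`Uᵀ (B - B') U'` has entries `(ν p - ν' q) W p q`; hence the off-diagonal block
`∑_{p ≥ s, q < s} W p q ^ 2` is at most `‖B - B'‖_F² / δ'² = 4 / (x δ')²`. The squared Frobenius
distance of the two projectors is twice that block, and the operator norm is at most the
Frobenius norm, so it is at most `√8 / (x δ') ≤ 4 / (x δ')`.
-/

open Matrix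

/-- Operator 2-norm of a real matrix, via the induced Euclidean operator norm. -/
noncomputable def opNorm {n : ℕ} (M : Matrix (Fin n) (Fin n) ℝ) : ℝ :=
  ‖LinearMap.toContinuousLinearMap (Matrix.toEuclideanLin M)‖

section FrobeniusSq

variable {ι κ : Type*} [Fintype ι] [Fintype κ]

def frobSq (A : Matrix ι κ ℝ) : ℝ := ∑ p, ∑ q, A p q ^ 2

lemma frobSq_eq_trace (A : Matrix ι κ ℝ) : frobSq A = trace (Aᵀ * A) := by
  simp only [frobSq, trace, diag, mul_apply, transpose_apply, sq]
  exact Finset.sum_comm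

lemma frobSq_mul_of_transpose_mul_self [DecidableEq ι] {R : Matrix ι ι ℝ} (hR : Rᵀ * R = 1)
    (A : Matrix ι κ ℝ) : frobSq (R * A) = frobSq A := by
  rw [frobSq_eq_trace, frobSq_eq_trace, transpose_mul, Matrix.mul_assoc, ← Matrix.mul_assoc Rᵀ,
    hR, Matrix.one_mul]

lemma frobSq_mul_of_mul_transpose_self [DecidableEq κ] {R : Matrix κ κ ℝ} (hR : R * Rᵀ = 1)
    (A : Matrix ι κ ℝ) : frobSq (A * R) = frobSq A := by
  rw [frobSq_eq_trace, frobSq_eq_trace, transpose_mul, Matrix.mul_assoc, trace_mul_comm]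
  simp only [Matrix.mul_assoc, hR, Matrix.mul_one]

lemma frobSq_smul_vecMulVec_self (c : ℝ) (a : ι → ℝ) :
    frobSq (c • vecMulVec a a) = c ^ 2 * (a ⬝ᵥ a) ^ 2 := by
  simp only [frobSq, Matrix.smul_apply, vecMulVec_apply, smul_eq_mul, dotProduct]
  rw [sq (∑ i, _), Finset.sum_mul_sum, Finset.mul_sum]
  exact Finset.sum_congr rfl fun p _ => by
    rw [Finset.mul_sum]; exact Finset.sum_congr rfl fun q _ => by ring

lemma opNorm_le_sqrt_frobSq {n : ℕ} (M : Matrix (Fin n) (Fin n) ℝ) : opNorm M ≤ √(frobSq M) := by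
  refine ContinuousLinearMap.opNorm_le_bound _ (Real.sqrt_nonneg _) fun v => ?_
  simp only [LinearMap.coe_toContinuousLinearMap', EuclideanSpace.norm_eq]
  rw [← Real.sqrt_mul' _ (Finset.sum_nonneg fun _ _ => sq_nonneg _)]
  refine Real.sqrt_le_sqrt ?_
  rw [frobSq, Finset.sum_mul]
  simp only [toLpLin_apply, PiLp.toLp_apply, Real.norm_eq_abs, sq_abs, mulVec, dotProduct]
  exact Finset.sum_le_sum fun p _ => Finset.sum_mul_sq_le_sq_mul_sq _ _ _

end FrobeniusSq

section Eigenbasis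

variable {ι : Type*} [Fintype ι] [DecidableEq ι]

lemma mulVec_dotProduct_mulVec_of_transpose_mul_self {U : Matrix ι ι ℝ} (hU : Uᵀ * U = 1)
    (x y : ι → ℝ) : (U *ᵥ x) ⬝ᵥ (U *ᵥ y) = x ⬝ᵥ y := by
  rw [dotProduct_mulVec, ← mulVec_transpose, mulVec_mulVec, hU, one_mulVec]

lemma mulVec_dotProduct_mulVec_eq_sum {C V : Matrix ι ι ℝ} {μ : ι → ℝ} (hV : Vᵀ * V = 1)
    (hCV : C * V = V * diagonal μ) (x : ι → ℝ) :
    (V *ᵥ x) ⬝ᵥ (C *ᵥ (V *ᵥ x)) = ∑ p, μ p * x p ^ 2 := by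
  rw [mulVec_mulVec, hCV, ← mulVec_mulVec, mulVec_dotProduct_mulVec_of_transpose_mul_self hV]
  simp only [dotProduct, mulVec_diagonal]
  exact Finset.sum_congr rfl fun p _ => by ring

lemma mul_eq_mul_diagonal_of_eq {A U : Matrix ι ι ℝ} {lam : ι → ℝ} (hU : Uᵀ * U = 1)
    (hA : A = U * diagonal lam * Uᵀ) : A * U = U * diagonal lam := by
  rw [hA, Matrix.mul_assoc, hU, Matrix.mul_one]

lemma pos_of_posDef_of_eq {A U : Matrix ι ι ℝ} {lam : ι → ℝ} (hA : A.PosDef) (hU : Uᵀ * U = 1)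
    (hdec : A = U * diagonal lam * Uᵀ) (k : ι) : 0 < lam k := by
  have hne : U *ᵥ Pi.single k 1 ≠ 0 := fun h => by
    have := congrArg (Uᵀ *ᵥ ·) h
    simp only [mulVec_mulVec, hU, one_mulVec, mulVec_zero] at this
    simpa using congrFun this k
  have := hA.dotProduct_mulVec_pos hne
  rwa [star_trivial, mulVec_dotProduct_mulVec_eq_sum hU (mul_eq_mul_diagonal_of_eq hU hdec),
    Finset.sum_eq_single k (fun p _ hp => by simp [hp]) (by simp), Pi.single_eq_same, one_pow,
    mul_one] at this

lemma mul_eq_mul_diagonal_inv_of_inv_eq {B U : Matrix ι ι ℝ} {lam : ι → ℝ} (hB : IsUnit B.det)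
    (hU : Uᵀ * U = 1) (hdec : B⁻¹ = U * diagonal lam * Uᵀ) (hlam : ∀ k, lam k ≠ 0) :
    B * U = U * diagonal (fun k => (lam k)⁻¹) := by
  have hdiag : diagonal lam * diagonal (fun k => (lam k)⁻¹) = 1 := by
    rw [diagonal_mul_diagonal, ← diagonal_one]
    exact congrArg diagonal (funext fun k => mul_inv_cancel₀ (hlam k))
  calc B * U = B * (B⁻¹ * U) * diagonal (fun k => (lam k)⁻¹) := by
        rw [mul_eq_mul_diagonal_of_eq hU hdec, Matrix.mul_assoc, Matrix.mul_assoc, hdiag,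
          Matrix.mul_one]
    _ = U * diagonal (fun k => (lam k)⁻¹) := by
        rw [← Matrix.mul_assoc, mul_nonsing_inv _ hB, Matrix.one_mul]

end Eigenbasis

section Weyl

lemma sum_mul_sq_le_of_eq_zero_of_lt {ι : Type*} [Fintype ι] [LinearOrder ι] {ν c : ι → ℝ}
    (hν : Monotone ν) {k : ι} (hc : ∀ p, k < p → c p = 0) :
    ∑ p, ν p * c p ^ 2 ≤ ν k * ∑ p, c p ^ 2 := by
  rw [Finset.mul_sum]
  refine Finset.sum_le_sum fun p _ => ?_
  rcases le_or_gt p k with hpk | hkp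
  · exact mul_le_mul_of_nonneg_right (hν hpk) (sq_nonneg _)
  · simp [hc p hkp]

lemma mul_sum_sq_le_of_eq_zero_of_lt {ι : Type*} [Fintype ι] [LinearOrder ι] {ν c : ι → ℝ}
    (hν : Monotone ν) {k : ι} (hc : ∀ q, q < k → c q = 0) :
    ν k * ∑ q, c q ^ 2 ≤ ∑ q, ν q * c q ^ 2 := by
  rw [Finset.mul_sum]
  refine Finset.sum_le_sum fun q _ => ?_
  rcases lt_or_ge q k with hqk | hkq
  · simp [hc q hqk]
  · exact mul_le_mul_of_nonneg_right (hν hkq) (sq_nonneg _)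

/-- `n - 1` linear conditions on `ℝⁿ` leave a nonzero solution. -/
lemma exists_ne_zero_eq_zero_of_lt_mulVec_eq_zero_of_lt {n : ℕ} (W : Matrix (Fin n) (Fin n) ℝ)
    (k : Fin n) : ∃ c ≠ 0, (∀ p, k < p → c p = 0) ∧ ∀ q, q < k → (W *ᵥ c) q = 0 := by
  let F : (Fin n → ℝ) →ₗ[ℝ] Fin (n - 1) → ℝ := LinearMap.pi fun r =>
    if h : (r : ℕ) < k then (LinearMap.proj ⟨r, by omega⟩).comp W.mulVecLin
    else LinearMap.proj ⟨r + 1, by omega⟩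
  obtain ⟨c, hcF, hc0⟩ := Submodule.exists_mem_ne_zero_of_ne_bot <|
    F.ker_ne_bot_of_finrank_lt (by have := k.isLt; simp only [Module.finrank_fin_fun]; omega)
  have hF (r : Fin (n - 1)) : F c r = 0 := congrFun (LinearMap.mem_ker.mp hcF) r
  refine ⟨c, hc0, fun p hkp => ?_, fun q hqk => ?_⟩
  · have := hF ⟨p - 1, by omega⟩
    simp only [F, LinearMap.pi_apply, dif_neg (show ¬ (p : ℕ) - 1 < k by omega)] at this
    rwa [LinearMap.proj_apply,
      show (⟨(p : ℕ) - 1 + 1, _⟩ : Fin n) = p from Fin.ext (by simp; omega)] at this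
  · have := hF ⟨q, by omega⟩
    simpa [F, hqk] using this

theorem eigenvalue_le_of_quadForm_le {n : ℕ} {B B' U U' : Matrix (Fin n) (Fin n) ℝ}
    {ν ν' : Fin n → ℝ} (hU : Uᵀ * U = 1) (hU' : U'ᵀ * U' = 1)
    (hBU : B * U = U * diagonal ν) (hB'U' : B' * U' = U' * diagonal ν')
    (hν : Monotone ν) (hν' : Monotone ν') (hle : ∀ v, v ⬝ᵥ (B' *ᵥ v) ≤ v ⬝ᵥ (B *ᵥ v))
    (k : Fin n) : ν' k ≤ ν k := by
  obtain ⟨c, hc0, hc, hc'⟩ := exists_ne_zero_eq_zero_of_lt_mulVec_eq_zero_of_lt (U'ᵀ * U) k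
  set c' := (U'ᵀ * U) *ᵥ c
  have hv : U' *ᵥ c' = U *ᵥ c := by
    rw [mulVec_mulVec, ← Matrix.mul_assoc, mul_eq_one_comm.mp hU', Matrix.one_mul]
  have hnorm : ∑ q, c' q ^ 2 = ∑ p, c p ^ 2 := by
    have := mulVec_dotProduct_mulVec_of_transpose_mul_self hU' c' c'
    rw [hv, mulVec_dotProduct_mulVec_of_transpose_mul_self hU] at this
    simpa only [dotProduct, sq] using this.symm
  have hpos : 0 < ∑ p, c p ^ 2 := by
    simpa only [star_trivial, dotProduct, sq] using dotProduct_star_self_pos_iff.mpr hc0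
  refine le_of_mul_le_mul_right ?_ hpos
  calc ν' k * ∑ p, c p ^ 2 = ν' k * ∑ q, c' q ^ 2 := by rw [hnorm]
    _ ≤ ∑ q, ν' q * c' q ^ 2 := mul_sum_sq_le_of_eq_zero_of_lt hν' hc'
    _ = (U *ᵥ c) ⬝ᵥ (B' *ᵥ (U *ᵥ c)) := by
        rw [← hv, mulVec_dotProduct_mulVec_eq_sum hU' hB'U']
    _ ≤ (U *ᵥ c) ⬝ᵥ (B *ᵥ (U *ᵥ c)) := hle _
    _ = ∑ p, ν p * c p ^ 2 := mulVec_dotProduct_mulVec_eq_sum hU hBU c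
    _ ≤ ν k * ∑ p, c p ^ 2 := sum_mul_sq_le_of_eq_zero_of_lt hν hc

lemma le_eigenvalue_sub_of_gap {n s : ℕ} (hs0 : 0 < s) (hsn : s + 1 ≤ n) {ν ν' : Fin n → ℝ}
    (hν : Monotone ν) (hν' : Monotone ν') (hweyl : ∀ k, ν' k ≤ ν k) {δ : ℝ}
    (hδ : δ ≤ ν ⟨s, by omega⟩ - ν ⟨s - 1, by omega⟩) {p q : Fin n} (hp : s ≤ (p : ℕ))
    (hq : (q : ℕ) < s) : δ ≤ ν p - ν' q := by
  have h1 : ν' q ≤ ν' ⟨s - 1, by omega⟩ := hν' (Fin.le_def.mpr (by simp; omega))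
  have h2 : ν ⟨s, by omega⟩ ≤ ν p := hν (Fin.le_def.mpr hp)
  linarith [hweyl ⟨s - 1, by omega⟩]

end Weyl

section DavisKahan

variable {ι : Type*} [Fintype ι] [DecidableEq ι]

def colSpanProj (U : Matrix ι ι ℝ) (S : Finset ι) : Matrix ι ι ℝ :=
  U * diagonal (fun k => if k ∈ S then 1 else 0) * Uᵀ

lemma sum_compl_sum_sq_eq_sum_sum_compl_sq {W : Matrix ι ι ℝ} (hW : Wᵀ * W = 1)
    (hW' : W * Wᵀ = 1) (S : Finset ι) :
    ∑ p ∈ Sᶜ, ∑ q ∈ S, W p q ^ 2 = ∑ p ∈ S, ∑ q ∈ Sᶜ, W p q ^ 2 := by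
  have hcol (q : ι) : ∑ p, W p q ^ 2 = 1 := by
    simpa [mul_apply, sq] using congrFun (congrFun hW q) q
  have hrow (p : ι) : ∑ q, W p q ^ 2 = 1 := by
    simpa [mul_apply, sq] using congrFun (congrFun hW' p) p
  have hS : ∑ p ∈ Sᶜ, ∑ q ∈ S, W p q ^ 2 + ∑ p ∈ S, ∑ q ∈ S, W p q ^ 2 = S.card := by
    rw [Finset.sum_compl_add_sum, Finset.sum_comm]
    simp [hcol]
  have hS' : ∑ p ∈ S, ∑ q ∈ Sᶜ, W p q ^ 2 + ∑ p ∈ S, ∑ q ∈ S, W p q ^ 2 = S.card := by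
    rw [← Finset.sum_add_distrib]
    simp [Finset.sum_compl_add_sum, hrow]
  linarith

lemma frobSq_colSpanProj_sub {U U' : Matrix ι ι ℝ} (hU : Uᵀ * U = 1) (hU' : U'ᵀ * U' = 1)
    (S : Finset ι) :
    frobSq (colSpanProj U S - colSpanProj U' S) = 2 * ∑ p ∈ Sᶜ, ∑ q ∈ S, (Uᵀ * U') p q ^ 2 := by
  set χ : ι → ℝ := fun k => if k ∈ S then 1 else 0
  set W := Uᵀ * U'
  have hUU := mul_eq_one_comm.mp hU
  have hU'U' := mul_eq_one_comm.mp hU'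
  have hconj :
      Uᵀ * (colSpanProj U S - colSpanProj U' S) * U' = diagonal χ * W - W * diagonal χ := by
    simp only [colSpanProj, W, Matrix.mul_sub, Matrix.sub_mul, Matrix.mul_assoc]
    simp only [← Matrix.mul_assoc Uᵀ U, hU, hU', Matrix.one_mul,
      Matrix.mul_one]
    rfl
  rw [← frobSq_mul_of_transpose_mul_self (R := Uᵀ) (by rwa [transpose_transpose]),
    ← frobSq_mul_of_mul_transpose_self hU'U', hconj]
  have hentry (p q : ι) : (diagonal χ * W - W * diagonal χ) p q ^ 2 =
      (if p ∈ S then if q ∈ Sᶜ then W p q ^ 2 else 0 else 0) +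
        (if p ∈ Sᶜ then if q ∈ S then W p q ^ 2 else 0 else 0) := by
    simp only [Matrix.sub_apply, diagonal_mul, mul_diagonal, χ, Finset.mem_compl]
    split_ifs <;> ring
  have hW : Wᵀ * W = 1 := by
    simp only [W, transpose_mul, transpose_transpose, Matrix.mul_assoc]
    rw [← Matrix.mul_assoc U, hUU, Matrix.one_mul, hU']
  have hW' : W * Wᵀ = 1 := by
    simp only [W, transpose_mul, transpose_transpose, Matrix.mul_assoc]
    rw [← Matrix.mul_assoc U', hU'U', Matrix.one_mul, hU]
  simp only [frobSq, hentry, Finset.sum_add_distrib, Finset.sum_ite_irrel, Finset.sum_const_zero,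
    Finset.sum_ite_mem_eq]
  rw [sum_compl_sum_sq_eq_sum_sum_compl_sq hW hW' S]
  ring

lemma transpose_mul_sub_mul_apply {B B' U U' : Matrix ι ι ℝ} {ν ν' : ι → ℝ} (hB : Bᵀ = B)
    (hBU : B * U = U * diagonal ν) (hB'U' : B' * U' = U' * diagonal ν') (p q : ι) :
    (Uᵀ * (B - B') * U') p q = (ν p - ν' q) * (Uᵀ * U') p q := by
  have hUB : Uᵀ * B = diagonal ν * Uᵀ := by
    simpa [transpose_mul, hB] using congrArg transpose hBU
  rw [Matrix.mul_sub, Matrix.sub_mul, hUB, Matrix.mul_assoc Uᵀ B', hB'U', Matrix.mul_assoc,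
    ← Matrix.mul_assoc Uᵀ U', Matrix.sub_apply, diagonal_mul, mul_diagonal]
  ring

theorem frobSq_colSpanProj_sub_le {B B' U U' : Matrix ι ι ℝ} {ν ν' : ι → ℝ} (hB : Bᵀ = B)
    (hU : Uᵀ * U = 1) (hU' : U'ᵀ * U' = 1)
    (hBU : B * U = U * diagonal ν) (hB'U' : B' * U' = U' * diagonal ν') (S : Finset ι) {δ : ℝ}
    (hδ : 0 < δ) (hgap : ∀ p ∉ S, ∀ q ∈ S, δ ≤ ν p - ν' q) :
    frobSq (colSpanProj U S - colSpanProj U' S) ≤ 2 * frobSq (B - B') / δ ^ 2 := by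
  have hC : frobSq (Uᵀ * (B - B') * U') = frobSq (B - B') := by
    rw [frobSq_mul_of_mul_transpose_self (mul_eq_one_comm.mp hU'),
      frobSq_mul_of_transpose_mul_self (by rw [transpose_transpose]; exact mul_eq_one_comm.mp hU)]
  have hterm (p : ι) (hp : p ∉ S) (q : ι) (hq : q ∈ S) :
      (Uᵀ * U') p q ^ 2 ≤ (Uᵀ * (B - B') * U') p q ^ 2 / δ ^ 2 := by
    rw [le_div_iff₀ (by positivity), transpose_mul_sub_mul_apply hB hBU hB'U', mul_pow,
      mul_comm]
    gcongr
    exact hgap p hp q hq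
  rw [frobSq_colSpanProj_sub hU hU', mul_div_assoc, ← hC, frobSq, Finset.sum_div]
  gcongr 2 * ?_
  calc ∑ p ∈ Sᶜ, ∑ q ∈ S, (Uᵀ * U') p q ^ 2
      ≤ ∑ p ∈ Sᶜ, ∑ q ∈ S, (Uᵀ * (B - B') * U') p q ^ 2 / δ ^ 2 := by
        gcongr with p hp q hq
        exact hterm p (Finset.mem_compl.mp hp) q hq
    _ ≤ ∑ p ∈ Sᶜ, ∑ q, (Uᵀ * (B - B') * U') p q ^ 2 / δ ^ 2 :=
        Finset.sum_le_sum fun p _ => Finset.sum_le_sum_of_subset_of_nonneg (Finset.subset_univ _)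
          fun _ _ _ => by positivity
    _ ≤ ∑ p, ∑ q, (Uᵀ * (B - B') * U') p q ^ 2 / δ ^ 2 :=
        Finset.sum_le_sum_of_subset_of_nonneg (Finset.subset_univ _)
          fun _ _ _ => Finset.sum_nonneg fun _ _ => by positivity
    _ = ∑ p, (∑ q, (Uᵀ * (B - B') * U') p q ^ 2) / δ ^ 2 := by simp only [Finset.sum_div]

end DavisKahan

lemma of_castLE_mul_transpose_eq_colSpanProj {n s : ℕ} (h : s ≤ n)
    (U : Matrix (Fin n) (Fin n) ℝ) :
    (of fun p (q : Fin s) => U p (Fin.castLE h q)) *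
        (of fun p (q : Fin s) => U p (Fin.castLE h q))ᵀ =
      colSpanProj U (Finset.univ.filter fun k => (k : ℕ) < s) := by
  ext p r
  rw [colSpanProj, mul_apply, mul_apply]
  simp only [mul_diagonal, of_apply, transpose_apply, mul_ite, mul_one, mul_zero, ite_mul, zero_mul]
  rw [← Finset.sum_filter]
  refine Finset.sum_nbij (Fin.castLE h) (by simp) (Fin.castLE_injective h).injOn ?_ (by simp)
  intro k hk
  simp only [Finset.mem_coe, Finset.mem_filter, Finset.mem_univ, true_and] at hk
  exact ⟨⟨k, hk⟩, by simp, rfl⟩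

lemma dotProduct_mulVec_sub_smul_vecMulVec_le {ι : Type*} [Fintype ι] (B : Matrix ι ι ℝ) {c : ℝ}
    (hc : 0 ≤ c) (a v : ι → ℝ) : v ⬝ᵥ ((B - c • vecMulVec a a) *ᵥ v) ≤ v ⬝ᵥ (B *ᵥ v) := by
  rw [sub_mulVec, dotProduct_sub, smul_mulVec, vecMulVec_mulVec, op_smul_eq_smul, dotProduct_smul,
    dotProduct_smul, dotProduct_comm v a, sub_le_self_iff]
  exact mul_nonneg hc (mul_self_nonneg _)

lemma dotProduct_self_eq_two_of_eq_ite {ι : Type*} [Fintype ι] [DecidableEq ι] {i j : ι}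
    (hij : i ≠ j) {a : ι → ℝ} (ha : a = fun v => if v = i then 1 else if v = j then -1 else 0) :
    a ⬝ᵥ a = 2 := by
  subst ha
  rw [dotProduct, Fintype.sum_eq_add i j hij fun v hv => by simp [hv.1, hv.2]]
  norm_num [hij.symm]

/-- The distance between the two eigenspaces is measured as the 2-norm of the difference of their
orthogonal projectors, which equals the 2-norm of the diagonal matrix of sines of the principal
angles. -/
theorem stmt6 {n s : ℕ} (hs0 : 0 < s) (hsn : s + 1 ≤ n)
    (B : Matrix (Fin n) (Fin n) ℝ) (hB : B.PosDef)
    (x : ℝ) (hx : 0 < x) (i j : Fin n) (hij : i ≠ j)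
    (a : Fin n → ℝ) (ha : a = fun v => if v = i then 1 else if v = j then -1 else 0)
    (B' : Matrix (Fin n) (Fin n) ℝ) (hB'def : B' = B - x⁻¹ • vecMulVec a a)
    (hB' : B'.PosDef)
    (U U' : Matrix (Fin n) (Fin n) ℝ) (lam lam' : Fin n → ℝ)
    (hU : Uᵀ * U = 1) (hU' : U'ᵀ * U' = 1)
    (hlam : Antitone lam) (hlam' : Antitone lam') (hlampos : ∀ k, 0 < lam k)
    (hdec : B⁻¹ = U * Matrix.diagonal lam * Uᵀ)
    (hdec' : B'⁻¹ = U' * Matrix.diagonal lam' * U'ᵀ)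
    (δ' : ℝ)
    (hδ'def : δ' = Finset.univ.inf' ⟨⟨0, hs0⟩, Finset.mem_univ _⟩
      (fun k : Fin s =>
        (lam (Fin.castLE hsn k.succ))⁻¹ -
        (lam (Fin.castLE hsn k.castSucc))⁻¹))
    (hδ' : 0 < δ') :
    let cast : Fin s → Fin n := fun q => Fin.castLE (by omega) q
    let Vs : Matrix (Fin n) (Fin s) ℝ := Matrix.of fun p q => U p (cast q)
    let Vs' : Matrix (Fin n) (Fin s) ℝ := Matrix.of fun p q => U' p (cast q)
    opNorm (Vs * Vsᵀ - Vs' * Vs'ᵀ) ≤ 4 / (x * δ') := by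
  intro cast Vs Vs'
  set S := Finset.univ.filter fun k : Fin n => (k : ℕ) < s
  have hlam'pos := pos_of_posDef_of_eq hB'.inv hU' hdec'
  have hBU := mul_eq_mul_diagonal_inv_of_inv_eq hB.det_pos.ne'.isUnit hU hdec
    fun k => (hlampos k).ne'
  have hB'U' := mul_eq_mul_diagonal_inv_of_inv_eq hB'.det_pos.ne'.isUnit hU' hdec'
    fun k => (hlam'pos k).ne'
  have hν : Monotone fun k => (lam k)⁻¹ := fun k l hkl => inv_anti₀ (hlampos l) (hlam hkl)
  have hν' : Monotone fun k => (lam' k)⁻¹ := fun k l hkl => inv_anti₀ (hlam'pos l) (hlam' hkl)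
  have hweyl := eigenvalue_le_of_quadForm_le hU hU' hBU hB'U' hν hν' fun v =>
    hB'def ▸ dotProduct_mulVec_sub_smul_vecMulVec_le B (inv_nonneg.mpr hx.le) a v
  have hδ'le : δ' ≤ (lam ⟨s, by omega⟩)⁻¹ - (lam ⟨s - 1, by omega⟩)⁻¹ := by
    rw [hδ'def]
    convert Finset.inf'_le _ (Finset.mem_univ (⟨s - 1, by omega⟩ : Fin s)) using 4 <;>
      ext <;> simp; omega
  have hgap : ∀ p ∉ S, ∀ q ∈ S, δ' ≤ (lam p)⁻¹ - (lam' q)⁻¹ := fun p hp q hq =>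
    le_eigenvalue_sub_of_gap hs0 hsn hν hν' hweyl hδ'le (by simpa [S] using hp)
      (by simpa [S] using hq)
  have hE : frobSq (B - B') = 4 / x ^ 2 := by
    rw [hB'def, sub_sub_cancel, frobSq_smul_vecMulVec_self,
      dotProduct_self_eq_two_of_eq_ite hij ha]
    ring
  have hDK := frobSq_colSpanProj_sub_le (by simpa using hB.isHermitian.eq) hU hU' hBU hB'U' S
    hδ' hgap
  rw [show Vs * Vsᵀ - Vs' * Vs'ᵀ = colSpanProj U S - colSpanProj U' S by
    rw [of_castLE_mul_transpose_eq_colSpanProj, of_castLE_mul_transpose_eq_colSpanProj]]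
  calc opNorm (colSpanProj U S - colSpanProj U' S)
      ≤ √(2 * (4 / x ^ 2) / δ' ^ 2) :=
        (opNorm_le_sqrt_frobSq _).trans (Real.sqrt_le_sqrt (hE ▸ hDK))
    _ ≤ 4 / (x * δ') := by
      rw [Real.sqrt_le_left (by positivity), div_pow, mul_pow]
      field_simp
      norm_num
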